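/- Assume the Gaussian change-point model with nτ an integer in {2,...,n−2}. For an integer k with nτ < k ≤ n−2 define N₁(k/n) = Σ_{j=1}^T Σ_{i=nτ+1}^{k} η_{i,j} δ_j and N₂(k/n) = Σ_{j=1}^T (Σ_{i=1}^{k} η_{i,j})(k−nτ)δ_j/k, where δ_j = θ⁺_j − θ⁻_j. Then for every λ > 0, P(there exists k ∈ {nτ + nλΨ_n(T,Δ_T), ..., n−2} such that |N₁(k/n) − N₂(k/n)|/σ² > (nΔ_T²/σ²)·((k/n − τ)nτ)/(4k)) ≤ 2n[exp(−τ²λ/64) + exp(−τ² n Δ_T²/(64σ²))]. -/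

import Mathlib

open MeasureTheory ProbabilityTheory Finset

noncomputable section

/-- Squared gap `Δ_T² = ∑_{j=1}^T (θ⁻_j - θ⁺_j)²`. -/
def gapSq (θm θp : ℕ → ℝ) (T : ℕ) : ℝ := ∑ j ∈ Finset.Icc 1 T, (θm j - θp j) ^ 2

/-- Rate function `Ψ_n(T, Δ) = (σ²/(nΔ²)) · max(1, σ²T/(nΔ²))`. -/
def Psi (n : ℕ) (σ : ℝ) (T : ℕ) (Δsq : ℝ) : ℝ :=
  σ ^ 2 / (n * Δsq) * max 1 (σ ^ 2 * T / (n * Δsq))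

section Helpers
open Real
open scoped NNReal ENNReal

lemma gauss_exp_aux {Ω : Type*} [MeasurableSpace Ω] {P : Measure Ω} [IsProbabilityMeasure P]
    {X : Ω → ℝ} {v : ℝ≥0} (hv : v ≠ 0) (hX : AEMeasurable X P)
    (hmap : Measure.map X P = gaussianReal 0 v) (a : ℝ) :
    Integrable (fun ω => Real.exp (a * X ω)) P ∧
    ∫ ω, Real.exp (a * X ω) ∂P = Real.exp ((v : ℝ) * a ^ 2 / 2) := by
  have hv0 : (0 : ℝ) < v := by
    exact_mod_cast hv.bot_lt
  have hpt : ∀ x : ℝ, gaussianPDFReal 0 v x * Real.exp (a * x)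
      = Real.exp ((v : ℝ) * a ^ 2 / 2) * gaussianPDFReal ((v : ℝ) * a) v x := by
    intro x
    simp only [gaussianPDFReal]
    have hexp : Real.exp (-(x - 0) ^ 2 / (2 * (v : ℝ))) * Real.exp (a * x)
        = Real.exp ((v : ℝ) * a ^ 2 / 2) * Real.exp (-(x - (v : ℝ) * a) ^ 2 / (2 * (v : ℝ))) := by
      rw [← Real.exp_add, ← Real.exp_add]
      congr 1
      field_simp
      ring
    linear_combination (Real.sqrt (2 * π * (v : ℝ)))⁻¹ * hexp
  have hInt1 : Integrable (fun x => gaussianPDFReal 0 v x * Real.exp (a * x)) := by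
    simp only [hpt]
    exact (integrable_gaussianPDFReal _ _).const_mul _
  have hIg : ∫ x, gaussianPDFReal 0 v x * Real.exp (a * x) = Real.exp ((v : ℝ) * a ^ 2 / 2) := by
    simp only [hpt]
    rw [MeasureTheory.integral_const_mul, integral_gaussianPDFReal_eq_one _ hv, mul_one]
  set f : ℝ → ℝ≥0 := fun x => (gaussianPDFReal 0 v x).toNNReal with hf_def
  have hf : Measurable f := (measurable_gaussianPDFReal 0 v).real_toNNReal
  have hgr : gaussianReal 0 v = (volume : Measure ℝ).withDensity (fun x => (f x : ℝ≥0∞)) := by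
    rw [gaussianReal_of_var_ne_zero _ hv]
    rfl
  have hsmul : ∀ x : ℝ, f x • Real.exp (a * x) = gaussianPDFReal 0 v x * Real.exp (a * x) := by
    intro x
    simp [hf_def, NNReal.smul_def, Real.coe_toNNReal _ (gaussianPDFReal_nonneg 0 v x)]
  have hgm : AEStronglyMeasurable (fun x : ℝ => Real.exp (a * x)) (Measure.map X P) :=
    (Real.continuous_exp.comp (continuous_const.mul continuous_id)).aestronglyMeasurable
  have hIntMap : Integrable (fun x : ℝ => Real.exp (a * x)) (Measure.map X P) := by
    rw [hmap, hgr, integrable_withDensity_iff_integrable_smul hf]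
    simpa only [hsmul] using hInt1
  constructor
  · exact (integrable_map_measure hgm hX).mp hIntMap
  · calc ∫ ω, Real.exp (a * X ω) ∂P = ∫ x, Real.exp (a * x) ∂(Measure.map X P) :=
          (integral_map hX hgm).symm
      _ = Real.exp ((v : ℝ) * a ^ 2 / 2) := by
          rw [hmap, hgr, integral_withDensity_eq_integral_smul hf]
          simpa only [hsmul] using hIg

lemma gauss_tail_one {Ω : Type*} [MeasurableSpace Ω] {P : Measure Ω} [IsProbabilityMeasure P]
    {ι : Type*} [Fintype ι] {X : ι → Ω → ℝ} (hX : ∀ i, Measurable (X i))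
    (hind : iIndepFun X P) {v : ℝ≥0} (hv : v ≠ 0)
    (hmap : ∀ i, Measure.map (X i) P = gaussianReal 0 v)
    (c : ι → ℝ) {t C : ℝ} (ht : 0 < t) (hC : C = ∑ i, c i ^ 2) (hCpos : 0 < C) :
    (P {ω | t ≤ ∑ i, c i * X i ω}).toReal ≤ Real.exp (-(t ^ 2 / (2 * v * C))) := by
  have hv0 : (0 : ℝ) < v := by exact_mod_cast hv.bot_lt
  set s : ℝ := t / ((v : ℝ) * C) with hs_def
  have hs : 0 < s := by positivity
  set X' : ι → Ω → ℝ := fun i => fun ω => c i * X i ω with hX'_def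
  have hX'meas : ∀ i, Measurable (X' i) := fun i => (hX i).const_mul _
  have hind' : iIndepFun X' P :=
    hind.comp (fun i x => c i * x) (fun i => measurable_const_mul _)
  have hmgf : ∀ i (a : ℝ), Integrable (fun ω => Real.exp (a * X' i ω)) P ∧
      ∫ ω, Real.exp (a * X' i ω) ∂P = Real.exp ((v : ℝ) * (a * c i) ^ 2 / 2) := by
    intro i a
    have := gauss_exp_aux hv (hX i).aemeasurable (hmap i) (a * c i)
    constructor
    · have h1 := this.1
      simpa only [hX'_def, mul_assoc] using h1
    · have h2 := this.2
      simpa only [hX'_def, mul_assoc] using h2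
  have hint : ∀ i, Integrable (fun ω => Real.exp (s * X' i ω)) P := fun i => (hmgf i s).1
  have hintsum : Integrable (fun ω => Real.exp (s * (∑ i, X' i) ω)) P :=
    hind'.integrable_exp_mul_sum hX'meas (fun i _ => hint i)
  have hset : {ω | t ≤ ∑ i, c i * X i ω} = {ω | t ≤ (∑ i, X' i) ω} := by
    ext ω; simp [hX'_def, Finset.sum_apply]
  have hcher := measure_ge_le_exp_mul_mgf (μ := P) (X := ∑ i, X' i) t hs.le hintsum
  have hmgf_sum : mgf (∑ i, X' i) P s = Real.exp ((v : ℝ) * s ^ 2 * C / 2) := by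
    rw [hind'.mgf_sum hX'meas]
    have : ∀ i, mgf (X' i) P s = Real.exp ((v : ℝ) * (s * c i) ^ 2 / 2) := fun i => (hmgf i s).2
    simp only [this, ← Real.exp_sum]
    congr 1
    rw [hC, Finset.mul_sum, Finset.sum_div]
    refine Finset.sum_congr rfl (fun i _ => ?_)
    ring
  rw [hset]
  refine hcher.trans ?_
  rw [hmgf_sum, ← Real.exp_add]
  apply Real.exp_le_exp.mpr
  apply le_of_eq
  rw [hs_def]
  field_simp
  ring

lemma gauss_tail_abs {Ω : Type*} [MeasurableSpace Ω] {P : Measure Ω} [IsProbabilityMeasure P]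
    {ι : Type*} [Fintype ι] {X : ι → Ω → ℝ} (hX : ∀ i, Measurable (X i))
    (hind : iIndepFun X P) {v : ℝ≥0} (hv : v ≠ 0)
    (hmap : ∀ i, Measure.map (X i) P = gaussianReal 0 v)
    (c : ι → ℝ) {t C : ℝ} (ht : 0 < t) (hC : C = ∑ i, c i ^ 2) (hCpos : 0 < C) :
    P {ω | t ≤ |∑ i, c i * X i ω|} ≤ ENNReal.ofReal (2 * Real.exp (-(t ^ 2 / (2 * v * C)))) := by
  have h1 := gauss_tail_one hX hind hv hmap c ht hC hCpos
  have h2 := gauss_tail_one hX hind hv hmap (fun i => -c i) ht (by simpa using hC) hCpos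
  have hsub : {ω | t ≤ |∑ i, c i * X i ω|}
      ⊆ {ω | t ≤ ∑ i, c i * X i ω} ∪ {ω | t ≤ ∑ i, (-c i) * X i ω} := by
    intro ω hω
    simp only [Set.mem_setOf_eq] at hω
    rcases abs_cases (∑ i, c i * X i ω) with ⟨h, _⟩ | ⟨h, _⟩
    · left; exact Set.mem_setOf_eq ▸ (h ▸ hω)
    · right
      simp only [Set.mem_setOf_eq, neg_mul]
      have : ∑ x : ι, -(c x * X x ω) = -∑ i : ι, c i * X i ω := by
        rw [← Finset.sum_neg_distrib]
      rw [this, ← h]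
      exact hω
  calc P {ω | t ≤ |∑ i, c i * X i ω|}
      ≤ P ({ω | t ≤ ∑ i, c i * X i ω} ∪ {ω | t ≤ ∑ i, (-c i) * X i ω}) := measure_mono hsub
    _ ≤ P {ω | t ≤ ∑ i, c i * X i ω} + P {ω | t ≤ ∑ i, (-c i) * X i ω} := measure_union_le _ _
    _ ≤ ENNReal.ofReal (Real.exp (-(t ^ 2 / (2 * v * C))))
        + ENNReal.ofReal (Real.exp (-(t ^ 2 / (2 * v * C)))) := by
        gcongr
        · rw [← ENNReal.ofReal_toReal (measure_ne_top P _)]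
          exact ENNReal.ofReal_le_ofReal h1
        · rw [← ENNReal.ofReal_toReal (measure_ne_top P _)]
          exact ENNReal.ofReal_le_ofReal h2
    _ = ENNReal.ofReal (2 * Real.exp (-(t ^ 2 / (2 * v * C)))) := by
        rw [← ENNReal.ofReal_add (Real.exp_nonneg _) (Real.exp_nonneg _)]
        ring_nf

lemma iIndepFun_ae_congr {Ω ι : Type*} [MeasurableSpace Ω] {P : Measure Ω}
    [IsProbabilityMeasure P] {f g : ι → Ω → ℝ}
    (h : iIndepFun f P) (hfg : ∀ i, f i =ᵐ[P] g i) :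
    iIndepFun g P := by
  rw [iIndepFun_iff_measure_inter_preimage_eq_mul] at h ⊢
  intro S sets hsets
  have hae : ∀ᵐ ω ∂P, ∀ i ∈ S, f i ω = g i ω :=
    (MeasureTheory.ae_ball_iff S.countable_toSet).2 (fun i _ => hfg i)
  have h1 : (⋂ i ∈ S, f i ⁻¹' sets i) =ᵐ[P] (⋂ i ∈ S, g i ⁻¹' sets i) := by
    filter_upwards [hae] with ω hω
    show (ω ∈ ⋂ i ∈ S, f i ⁻¹' sets i) = (ω ∈ ⋂ i ∈ S, g i ⁻¹' sets i)
    simp only [eq_iff_iff, Set.mem_iInter, Set.mem_preimage]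
    constructor
    · intro H i hi
      rw [← hω i hi]
      exact H i hi
    · intro H i hi
      rw [hω i hi]
      exact H i hi
  have h2 : ∀ i ∈ S, P (f i ⁻¹' sets i) = P (g i ⁻¹' sets i) := by
    intro i hi
    apply measure_congr
    filter_upwards [hfg i] with ω hω
    show (ω ∈ f i ⁻¹' sets i) = (ω ∈ g i ⁻¹' sets i)
    simp only [eq_iff_iff, Set.mem_preimage]
    rw [hω]
  rw [← measure_congr h1, h S hsets]
  exact Finset.prod_congr rfl h2

lemma wsum_aux (n k₀ k : ℕ) (hk₀k : k₀ ≤ k) (hkn : k ≤ n) (g : ℕ → ℝ) :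
    ∑ i ∈ Finset.Icc 1 n,
        (if i ∈ Finset.Icc (k₀+1) k then (k₀:ℝ)/k
          else if i ∈ Finset.Icc 1 k₀ then -(((k:ℝ) - k₀)/k) else 0) * g i
      = (k₀:ℝ)/k * (∑ i ∈ Finset.Icc (k₀+1) k, g i)
        - ((k:ℝ)-k₀)/k * (∑ i ∈ Finset.Icc 1 k₀, g i) := by
  set w : ℕ → ℝ := fun i => (if i ∈ Finset.Icc (k₀+1) k then (k₀:ℝ)/k
          else if i ∈ Finset.Icc 1 k₀ then -(((k:ℝ) - k₀)/k) else 0) with hw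
  have e1 : Finset.Icc 1 n = Finset.Ioc 0 n := by rw [← Finset.Icc_add_one_left_eq_Ioc, zero_add]
  have e2 : Finset.Icc 1 k = Finset.Ioc 0 k := by rw [← Finset.Icc_add_one_left_eq_Ioc, zero_add]
  have e3 : Finset.Icc 1 k₀ = Finset.Ioc 0 k₀ := by rw [← Finset.Icc_add_one_left_eq_Ioc, zero_add]
  have e4 : Finset.Icc (k₀+1) k = Finset.Ioc k₀ k := by rw [← Finset.Icc_add_one_left_eq_Ioc]
  have h1 : ∑ i ∈ Finset.Ioc 0 k, w i * g i + ∑ i ∈ Finset.Ioc k n, w i * g i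
      = ∑ i ∈ Finset.Ioc 0 n, w i * g i :=
    Finset.sum_Ioc_consecutive _ (Nat.zero_le k) hkn
  have h2 : ∑ i ∈ Finset.Ioc 0 k₀, w i * g i + ∑ i ∈ Finset.Ioc k₀ k, w i * g i
      = ∑ i ∈ Finset.Ioc 0 k, w i * g i :=
    Finset.sum_Ioc_consecutive _ (Nat.zero_le k₀) hk₀k
  have hz : ∑ i ∈ Finset.Ioc k n, w i * g i = 0 := by
    apply Finset.sum_eq_zero
    intro i hi
    rw [Finset.mem_Ioc] at hi
    have hi1 : i ∉ Finset.Icc (k₀+1) k := by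
      rw [Finset.mem_Icc]; omega
    have hi2 : i ∉ Finset.Icc 1 k₀ := by
      rw [Finset.mem_Icc]; omega
    simp only [hw]
    rw [if_neg hi1, if_neg hi2, zero_mul]
  have hmid : ∑ i ∈ Finset.Ioc k₀ k, w i * g i
      = (k₀:ℝ)/k * ∑ i ∈ Finset.Icc (k₀+1) k, g i := by
    rw [Finset.mul_sum, ← e4]
    apply Finset.sum_congr rfl
    intro i hi
    simp only [hw]
    rw [if_pos hi]
  have hlow : ∑ i ∈ Finset.Ioc 0 k₀, w i * g i
      = -(((k:ℝ)-k₀)/k) * ∑ i ∈ Finset.Icc 1 k₀, g i := by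
    rw [Finset.mul_sum, ← e3]
    apply Finset.sum_congr rfl
    intro i hi
    rw [e3, Finset.mem_Ioc] at hi
    have hi1 : i ∉ Finset.Icc (k₀+1) k := by
      rw [Finset.mem_Icc]; omega
    have hi2 : i ∈ Finset.Icc 1 k₀ := by
      rw [Finset.mem_Icc]; omega
    simp only [hw]
    rw [if_neg hi1, if_pos hi2]
  rw [e1, ← h1, hz, add_zero, ← h2, hmid, hlow]
  ring

lemma prodsum_aux (n d T : ℕ) (hTd : T ≤ d) (u w : ℕ → ℝ) (G : ℕ → ℕ → ℝ) :
    ∑ q ∈ Finset.Icc 1 n ×ˢ Finset.Icc 1 d,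
        (if q.2 ∈ Finset.Icc 1 T then u q.2 else 0) * w q.1 * G q.1 q.2
      = ∑ j ∈ Finset.Icc 1 T, u j * ∑ i ∈ Finset.Icc 1 n, w i * G i j := by
  rw [Finset.sum_product, Finset.sum_comm]
  rw [← Finset.sum_subset (Finset.Icc_subset_Icc_right hTd)
    (fun j _ hj => by
      apply Finset.sum_eq_zero
      intro i _
      rw [if_neg hj, zero_mul, zero_mul])]
  apply Finset.sum_congr rfl
  intro j hj
  rw [Finset.mul_sum]
  apply Finset.sum_congr rfl
  intro i _
  rw [if_pos hj]
  ring

lemma decomp_aux (n d T k₀ k : ℕ) (hTd : T ≤ d) (hk₀k : k₀ ≤ k) (hkn : k ≤ n) (hk : 0 < k)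
    (δ : ℕ → ℝ) (g : ℕ → ℕ → ℝ) :
    ∑ q ∈ Finset.Icc 1 n ×ˢ Finset.Icc 1 d,
        (if q.2 ∈ Finset.Icc 1 T then δ q.2 else 0) *
          (if q.1 ∈ Finset.Icc (k₀+1) k then (k₀:ℝ)/k
            else if q.1 ∈ Finset.Icc 1 k₀ then -(((k:ℝ) - k₀)/k) else 0) * g q.1 q.2
      = (∑ j ∈ Finset.Icc 1 T, (∑ i ∈ Finset.Icc (k₀+1) k, g i j) * δ j)
        - ∑ j ∈ Finset.Icc 1 T, (∑ i ∈ Finset.Icc 1 k, g i j) * (((k:ℝ) - k₀) * δ j) / k := by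
  have hk0 : (k:ℝ) ≠ 0 := Nat.cast_ne_zero.2 hk.ne'
  have hps := prodsum_aux n d T hTd δ (fun i => if i ∈ Finset.Icc (k₀+1) k then (k₀:ℝ)/k
            else if i ∈ Finset.Icc 1 k₀ then -(((k:ℝ) - k₀)/k) else 0) g
  rw [hps, ← Finset.sum_sub_distrib]
  apply Finset.sum_congr rfl
  intro j _
  rw [wsum_aux n k₀ k hk₀k hkn]
  have hsplit : ∑ i ∈ Finset.Icc 1 k, g i j
      = (∑ i ∈ Finset.Icc 1 k₀, g i j) + ∑ i ∈ Finset.Icc (k₀+1) k, g i j := by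
    rw [show Finset.Icc 1 k = Finset.Ioc 0 k from by rw [← Finset.Icc_add_one_left_eq_Ioc, zero_add],
      show Finset.Icc 1 k₀ = Finset.Ioc 0 k₀ from by rw [← Finset.Icc_add_one_left_eq_Ioc, zero_add],
      show Finset.Icc (k₀+1) k = Finset.Ioc k₀ k from by rw [← Finset.Icc_add_one_left_eq_Ioc]]
    exact (Finset.sum_Ioc_consecutive _ (Nat.zero_le k₀) hk₀k).symm
  rw [hsplit]
  field_simp
  ring

lemma coefsq_aux (n d T k₀ k : ℕ) (hTd : T ≤ d) (hk₀k : k₀ ≤ k) (hkn : k ≤ n) (hk : 0 < k)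
    (δ : ℕ → ℝ) :
    ∑ q ∈ Finset.Icc 1 n ×ˢ Finset.Icc 1 d,
        ((if q.2 ∈ Finset.Icc 1 T then δ q.2 else 0) *
          (if q.1 ∈ Finset.Icc (k₀+1) k then (k₀:ℝ)/k
            else if q.1 ∈ Finset.Icc 1 k₀ then -(((k:ℝ) - k₀)/k) else 0)) ^ 2
      = (∑ j ∈ Finset.Icc 1 T, δ j ^ 2) * k₀ * ((k:ℝ) - k₀) / k := by
  have hk0 : (k:ℝ) ≠ 0 := Nat.cast_ne_zero.2 hk.ne'
  set w : ℕ → ℝ := fun i => (if i ∈ Finset.Icc (k₀+1) k then (k₀:ℝ)/k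
          else if i ∈ Finset.Icc 1 k₀ then -(((k:ℝ) - k₀)/k) else 0) with hw
  have hsq : ∀ q : ℕ × ℕ, ((if q.2 ∈ Finset.Icc 1 T then δ q.2 else 0) * w q.1) ^ 2
      = (if q.2 ∈ Finset.Icc 1 T then δ q.2 ^ 2 else 0) * (fun i => w i * w i) q.1
          * (fun _ _ => (1:ℝ)) q.1 q.2 := by
    intro q
    split_ifs <;> simp <;> ring
  change ∑ q ∈ Finset.Icc 1 n ×ˢ Finset.Icc 1 d,
      ((if q.2 ∈ Finset.Icc 1 T then δ q.2 else 0) * w q.1) ^ 2 = _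
  simp only [hsq]
  have hps := prodsum_aux n d T hTd (fun j => δ j ^ 2) (fun i => w i * w i) (fun _ _ => (1:ℝ))
  rw [hps]
  have hW2 : ∑ i ∈ Finset.Icc 1 n, (w i * w i) * 1
      = (k₀:ℝ) * ((k:ℝ) - k₀) / k := by
    simp only [mul_one]
    rw [wsum_aux n k₀ k hk₀k hkn w]
    have c1 : ∑ i ∈ Finset.Icc (k₀+1) k, w i = ((k:ℝ) - k₀) * ((k₀:ℝ)/k) := by
      have hval : ∀ i ∈ Finset.Icc (k₀+1) k, w i = (k₀:ℝ)/k := by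
        intro i hi
        simp only [hw]
        rw [if_pos hi]
      rw [Finset.sum_congr rfl hval, Finset.sum_const, nsmul_eq_mul, Nat.card_Icc]
      have hcast : ((k + 1 - (k₀+1) : ℕ) : ℝ) = (k:ℝ) - k₀ := by
        rw [Nat.cast_sub (by omega)]
        push_cast
        ring
      rw [hcast]
    have c2 : ∑ i ∈ Finset.Icc 1 k₀, w i = (k₀:ℝ) * (-(((k:ℝ) - k₀)/k)) := by
      have hval : ∀ i ∈ Finset.Icc 1 k₀, w i = -(((k:ℝ) - k₀)/k) := by
        intro i hi
        have hi1 : i ∉ Finset.Icc (k₀+1) k := by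
          rw [Finset.mem_Icc] at hi ⊢; omega
        simp only [hw]
        rw [if_neg hi1, if_pos hi]
      rw [Finset.sum_congr rfl hval, Finset.sum_const, nsmul_eq_mul, Nat.card_Icc]
      have hcast : ((k₀ + 1 - 1 : ℕ) : ℝ) = (k₀:ℝ) := by push_cast; ring
      rw [hcast]
    rw [c1, c2]
    field_simp
    ring
  rw [hW2, ← Finset.sum_mul]
  ring

end Helpers

open scoped NNReal ENNReal in
set_option maxHeartbeats 2000000 in
/-- Uniform deviation bound for the Gaussian terms `N₁`, `N₂` in the decomposition of the
`k`-means criterion. -/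
theorem gaussian_terms_bound
    {Ω : Type*} [MeasurableSpace Ω] (P : Measure Ω) [IsProbabilityMeasure P]
    (n d : ℕ) (hn : 3 ≤ n) (hd : 1 ≤ d) (σ : ℝ) (hσ : 0 < σ)
    (τ : ℝ) (k₀ : ℕ) (hk₀ : (k₀ : ℝ) = n * τ) (hk₀2 : 2 ≤ k₀) (hk₀n : k₀ ≤ n - 2)
    (θm θp : ℕ → ℝ) (T : ℕ) (hT : 1 ≤ T) (hTd : T ≤ d)
    (η : ℕ → ℕ → Ω → ℝ)
    (hind : iIndepFun
      (fun p : ↥(Finset.Icc 1 n ×ˢ Finset.Icc 1 d) => η p.1.1 p.1.2) P)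
    (hgauss : ∀ i ∈ Finset.Icc 1 n, ∀ j ∈ Finset.Icc 1 d,
      Measure.map (η i j) P = gaussianReal 0 ⟨σ ^ 2, sq_nonneg σ⟩)
    (N1 N2 : ℕ → Ω → ℝ)
    (hN1 : ∀ k : ℕ, ∀ ω, N1 k ω =
      ∑ j ∈ Finset.Icc 1 T, (∑ i ∈ Finset.Icc (k₀ + 1) k, η i j ω) * (θp j - θm j))
    (hN2 : ∀ k : ℕ, ∀ ω, N2 k ω =
      ∑ j ∈ Finset.Icc 1 T,
        (∑ i ∈ Finset.Icc 1 k, η i j ω) * (((k : ℝ) - k₀) * (θp j - θm j)) / k) :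
    ∀ lam : ℝ, 0 < lam →
      P {ω | ∃ k : ℕ, k ≤ n - 2 ∧
          (k : ℝ) ≥ k₀ + n * lam * Psi n σ T (gapSq θm θp T) ∧
          |N1 k ω - N2 k ω| / σ ^ 2 >
            n * gapSq θm θp T / σ ^ 2 * (((k : ℝ) / n - τ) * k₀) / (4 * k)}
        ≤ ENNReal.ofReal
            (2 * n * (Real.exp (-(τ ^ 2 * lam) / 64)
              + Real.exp (-(τ ^ 2 * n * gapSq θm θp T) / (64 * σ ^ 2)))) := by
  intro lam hlam
  classical
  have hΔnn : 0 ≤ gapSq θm θp T := Finset.sum_nonneg (fun j _ => sq_nonneg _)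
  have hσ2 : (0:ℝ) < σ ^ 2 := by positivity
  have hn0 : (0:ℝ) < n := by
    have : (3:ℝ) ≤ n := by exact_mod_cast hn
    linarith
  rcases eq_or_lt_of_le hΔnn with hΔ0 | hΔpos
  · -- degenerate case: gap is zero, the event is empty
    have hδ0 : ∀ j ∈ Finset.Icc 1 T, θp j - θm j = 0 := by
      intro j hj
      have h := (Finset.sum_eq_zero_iff_of_nonneg (fun j _ => sq_nonneg (θm j - θp j))).1
        hΔ0.symm j hj
      have h2 : θm j - θp j = 0 := by
        have := pow_eq_zero_iff (n := 2) (by norm_num) |>.1 h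
        exact this
      linarith
    have hempty : {ω | ∃ k : ℕ, k ≤ n - 2 ∧
          (k : ℝ) ≥ k₀ + n * lam * Psi n σ T (gapSq θm θp T) ∧
          |N1 k ω - N2 k ω| / σ ^ 2 >
            n * gapSq θm θp T / σ ^ 2 * (((k : ℝ) / n - τ) * k₀) / (4 * k)} = ∅ := by
      ext ω
      simp only [Set.mem_setOf_eq, Set.mem_empty_iff_false, iff_false, not_exists]
      rintro k ⟨_, _, hgt⟩
      have hN1z : N1 k ω = 0 := by
        rw [hN1]
        apply Finset.sum_eq_zero
        intro j hj
        rw [hδ0 j hj, mul_zero]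
      have hN2z : N2 k ω = 0 := by
        rw [hN2]
        apply Finset.sum_eq_zero
        intro j hj
        rw [hδ0 j hj, mul_zero, mul_zero, zero_div]
      have hrhs : (n:ℝ) * gapSq θm θp T / σ ^ 2 * (((k : ℝ) / n - τ) * k₀) / (4 * k) = 0 := by
        rw [← hΔ0]
        ring
      rw [hN1z, hN2z, hrhs] at hgt
      simp at hgt
    rw [hempty]
    simp
  · -- main case : 0 < gapSq
    set Δsq := gapSq θm θp T with hΔsq_def
    set v : NNReal := ⟨σ ^ 2, sq_nonneg σ⟩ with hv_def
    have hveq : (v : ℝ) = σ ^ 2 := rfl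
    have hv : v ≠ 0 := by
      intro h
      have h2 : (v : ℝ) = 0 := by rw [h]; simp
      rw [hveq] at h2
      linarith
    -- a.e. measurability of the noise
    have hae : ∀ i ∈ Finset.Icc 1 n, ∀ j ∈ Finset.Icc 1 d, AEMeasurable (η i j) P := by
      intro i hi j hj
      by_contra hc
      have h0 := Measure.map_of_not_aemeasurable hc
      rw [hgauss i hi j hj] at h0
      exact (IsProbabilityMeasure.ne_zero (gaussianReal 0 v)) h0
    -- measurable modifications
    set ηm : ℕ → ℕ → Ω → ℝ := fun i j =>
      if h : i ∈ Finset.Icc 1 n ∧ j ∈ Finset.Icc 1 d then (hae i h.1 j h.2).mk (η i j)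
      else fun _ => 0 with hηm_def
    have hmeas_ηm : ∀ i j, Measurable (ηm i j) := by
      intro i j
      by_cases h : i ∈ Finset.Icc 1 n ∧ j ∈ Finset.Icc 1 d
      · simp only [hηm_def, dif_pos h]
        exact (hae i h.1 j h.2).measurable_mk
      · simp only [hηm_def, dif_neg h]
        exact measurable_const
    have hae_eq : ∀ i ∈ Finset.Icc 1 n, ∀ j ∈ Finset.Icc 1 d, η i j =ᵐ[P] ηm i j := by
      intro i hi j hj
      simp only [hηm_def, dif_pos (And.intro hi hj)]
      exact (hae i hi j hj).ae_eq_mk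
    have hmap_ηm : ∀ i ∈ Finset.Icc 1 n, ∀ j ∈ Finset.Icc 1 d,
        Measure.map (ηm i j) P = gaussianReal 0 v := by
      intro i hi j hj
      rw [← Measure.map_congr (hae_eq i hi j hj)]
      exact hgauss i hi j hj
    have hmemp : ∀ p : ↥(Finset.Icc 1 n ×ˢ Finset.Icc 1 d),
        p.1.1 ∈ Finset.Icc 1 n ∧ p.1.2 ∈ Finset.Icc 1 d := fun p => Finset.mem_product.1 p.2
    have hindm : iIndepFun
        (fun p : ↥(Finset.Icc 1 n ×ˢ Finset.Icc 1 d) => ηm p.1.1 p.1.2) P :=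
      iIndepFun_ae_congr hind (fun p => hae_eq _ (hmemp p).1 _ (hmemp p).2)
    have hmapm : ∀ p : ↥(Finset.Icc 1 n ×ˢ Finset.Icc 1 d),
        Measure.map (ηm p.1.1 p.1.2) P = gaussianReal 0 v :=
      fun p => hmap_ηm _ (hmemp p).1 _ (hmemp p).2
    have hmeasm : ∀ p : ↥(Finset.Icc 1 n ×ˢ Finset.Icc 1 d),
        Measurable (ηm p.1.1 p.1.2) := fun p => hmeas_ηm _ _
    -- basic facts about τ
    have hτ : τ = (k₀ : ℝ) / n := by
      rw [eq_div_iff hn0.ne']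
      linarith [hk₀]
    have hk₀R : (0:ℝ) < k₀ := by
      have : (2:ℝ) ≤ k₀ := by exact_mod_cast hk₀2
      linarith
    have hτpos : 0 < τ := by
      rw [hτ]
      positivity
    have hτ1 : τ ≤ 1 := by
      rw [hτ, div_le_one hn0]
      exact_mod_cast Nat.le_of_lt_succ (by omega : k₀ < n + 1)
    -- Psi bounds
    have hPsi : σ ^ 2 / (n * Δsq) ≤ Psi n σ T Δsq := by
      unfold Psi
      nth_rewrite 1 [← mul_one (σ ^ 2 / ((n:ℝ) * Δsq))]
      apply mul_le_mul_of_nonneg_left (le_max_left _ _) (by positivity)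
    have hPsipos : 0 < Psi n σ T Δsq := lt_of_lt_of_le (by positivity) hPsi
    -- the per-k events
    set A : ℕ → Set Ω := fun k =>
      {ω | Δsq * ((k:ℝ) - k₀) * k₀ / (4 * k) ≤ |N1 k ω - N2 k ω|} with hA_def
    set S : Finset ℕ := (Finset.Icc (k₀+1) (n-2)).filter
      (fun k => (k₀ : ℝ) + n * lam * Psi n σ T Δsq ≤ (k:ℝ)) with hS_def
    -- inclusion of the event in the union
    have hsub : {ω | ∃ k : ℕ, k ≤ n - 2 ∧
          (k : ℝ) ≥ k₀ + n * lam * Psi n σ T Δsq ∧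
          |N1 k ω - N2 k ω| / σ ^ 2 >
            n * Δsq / σ ^ 2 * (((k : ℝ) / n - τ) * k₀) / (4 * k)} ⊆ ⋃ k ∈ S, A k := by
      rintro ω ⟨k, hk2, hge, hgt⟩
      have hk1 : k₀ + 1 ≤ k := by
        have h1 : (k₀:ℝ) < k := by
          have := mul_pos (mul_pos hn0 hlam) hPsipos
          linarith [hge]
        have : k₀ < k := by exact_mod_cast h1
        omega
      have hkR : (0:ℝ) < k := by
        have : (0:ℕ) < k := by omega
        exact_mod_cast this
      have hkS : k ∈ S := Finset.mem_filter.2 ⟨Finset.mem_Icc.2 ⟨hk1, hk2⟩, hge⟩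
      refine Set.mem_biUnion hkS ?_
      show Δsq * ((k:ℝ) - k₀) * k₀ / (4 * k) ≤ |N1 k ω - N2 k ω|
      have hRHS : (n:ℝ) * Δsq / σ ^ 2 * (((k : ℝ) / n - τ) * k₀) / (4 * k)
            = Δsq * ((k:ℝ) - k₀) * k₀ / (4 * k) / σ ^ 2 := by
        rw [hτ]
        field_simp
      rw [hRHS] at hgt
      have := (div_lt_div_iff_of_pos_right hσ2).1 hgt
      linarith [this]
    -- the per-k bound
    have hAk : ∀ k ∈ S, P (A k) ≤ ENNReal.ofReal (2 * Real.exp (-(τ ^ 2 * lam) / 64)) := by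
      intro k hkS
      obtain ⟨hkIcc, hge⟩ := Finset.mem_filter.1 hkS
      obtain ⟨hk1, hk2⟩ := Finset.mem_Icc.1 hkIcc
      have hk₀k : k₀ ≤ k := by omega
      have hkn : k ≤ n := by omega
      have hkpos : 0 < k := by omega
      have hkR : (0:ℝ) < k := by exact_mod_cast hkpos
      have hkk₀ : (k₀:ℝ) < k := by exact_mod_cast (by omega : k₀ < k)
      have hknR : (k:ℝ) ≤ n := by exact_mod_cast hkn
      set tk : ℝ := Δsq * ((k:ℝ) - k₀) * k₀ / (4 * k) with htk_def
      set Ck : ℝ := Δsq * (k₀:ℝ) * ((k:ℝ) - k₀) / k with hCk_def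
      have hkk₀' : (0:ℝ) < (k:ℝ) - k₀ := by linarith
      have htk : 0 < tk := by
        rw [htk_def]
        exact div_pos (mul_pos (mul_pos hΔpos hkk₀') hk₀R) (by positivity)
      have hCk : 0 < Ck := by
        rw [hCk_def]
        exact div_pos (mul_pos (mul_pos hΔpos hk₀R) hkk₀') (by positivity)
      set c : ℕ × ℕ → ℝ := fun q => (if q.2 ∈ Finset.Icc 1 T then (θp q.2 - θm q.2) else 0) *
          (if q.1 ∈ Finset.Icc (k₀+1) k then (k₀:ℝ)/k
            else if q.1 ∈ Finset.Icc 1 k₀ then -(((k:ℝ) - k₀)/k) else 0) with hc_def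
      have hde : ∀ ω, N1 k ω - N2 k ω
          = ∑ p : ↥(Finset.Icc 1 n ×ˢ Finset.Icc 1 d), c p.1 * η p.1.1 p.1.2 ω := by
        intro ω
        rw [hN1, hN2]
        rw [Finset.sum_coe_sort (Finset.Icc 1 n ×ˢ Finset.Icc 1 d)
          (fun q => c q * η q.1 q.2 ω)]
        have hda := decomp_aux n d T k₀ k hTd hk₀k hkn hkpos
          (fun j => θp j - θm j) (fun i j => η i j ω)
        rw [← hda]
      have hsq : Ck = ∑ p : ↥(Finset.Icc 1 n ×ˢ Finset.Icc 1 d), (c p.1) ^ 2 := by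
        rw [Finset.sum_coe_sort (Finset.Icc 1 n ×ˢ Finset.Icc 1 d) (fun q => (c q) ^ 2)]
        have hca := coefsq_aux n d T k₀ k hTd hk₀k hkn hkpos (fun j => θp j - θm j)
        have hgap : Δsq = ∑ j ∈ Finset.Icc 1 T, (θp j - θm j) ^ 2 := by
          rw [hΔsq_def]
          unfold gapSq
          exact Finset.sum_congr rfl (fun j _ => by ring)
        rw [show (fun q => (c q) ^ 2) = fun q : ℕ × ℕ =>
          ((if q.2 ∈ Finset.Icc 1 T then (θp q.2 - θm q.2) else 0) *
          (if q.1 ∈ Finset.Icc (k₀+1) k then (k₀:ℝ)/k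
            else if q.1 ∈ Finset.Icc 1 k₀ then -(((k:ℝ) - k₀)/k) else 0)) ^ 2 from rfl]
        rw [hca, hCk_def, ← hgap]
      calc P (A k)
          = P {ω | tk ≤ |∑ p : ↥(Finset.Icc 1 n ×ˢ Finset.Icc 1 d),
              c p.1 * ηm p.1.1 p.1.2 ω|} := by
            have hset1 : A k = {ω | tk ≤ |∑ p : ↥(Finset.Icc 1 n ×ˢ Finset.Icc 1 d),
                c p.1 * η p.1.1 p.1.2 ω|} := by
              ext ω
              rw [hA_def]
              simp only [Set.mem_setOf_eq, hde]
              exact Iff.rfl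
            rw [hset1]
            apply measure_congr
            have haeall : ∀ᵐ ω ∂P, ∀ p : ↥(Finset.Icc 1 n ×ˢ Finset.Icc 1 d),
                η p.1.1 p.1.2 ω = ηm p.1.1 p.1.2 ω :=
              (MeasureTheory.ae_all_iff).2 (fun p => hae_eq _ (hmemp p).1 _ (hmemp p).2)
            filter_upwards [haeall] with ω hω
            show (ω ∈ {ω | tk ≤ |∑ p : ↥(Finset.Icc 1 n ×ˢ Finset.Icc 1 d),
                c p.1 * η p.1.1 p.1.2 ω|}) = (ω ∈ {ω | tk ≤ |∑ p : ↥(Finset.Icc 1 n ×ˢ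
                Finset.Icc 1 d), c p.1 * ηm p.1.1 p.1.2 ω|})
            simp only [Set.mem_setOf_eq, eq_iff_iff]
            rw [Finset.sum_congr rfl (fun p _ => by rw [hω p])]
        _ ≤ ENNReal.ofReal (2 * Real.exp (-(tk ^ 2 / (2 * (v:ℝ) * Ck)))) :=
            gauss_tail_abs hmeasm hindm hv hmapm (fun p => c p.1) htk hsq hCk
        _ ≤ ENNReal.ofReal (2 * Real.exp (-(τ ^ 2 * lam) / 64)) := by
            apply ENNReal.ofReal_le_ofReal
            have hexp : τ ^ 2 * lam / 64 ≤ tk ^ 2 / (2 * (v:ℝ) * Ck) := by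
              have hstep : tk ^ 2 / (2 * (v:ℝ) * Ck)
                  = Δsq * ((k:ℝ) - k₀) * k₀ / (32 * k * σ ^ 2) := by
                rw [htk_def, hCk_def, hveq]
                have hne1 : ((k:ℝ) - k₀) ≠ 0 := hkk₀'.ne'
                have hne2 : Δsq ≠ 0 := hΔpos.ne'
                have hne3 : (k:ℝ) ≠ 0 := hkR.ne'
                have hne4 : (k₀:ℝ) ≠ 0 := hk₀R.ne'
                have hne5 : σ ≠ 0 := hσ.ne'
                field_simp
                ring
              have h1 : lam * σ ^ 2 ≤ Δsq * ((k:ℝ) - k₀) := by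
                have hp1 : (n:ℝ) * lam * (σ^2/(n*Δsq)) ≤ n * lam * Psi n σ T Δsq :=
                  mul_le_mul_of_nonneg_left hPsi (by positivity)
                have hp2 : (n:ℝ) * lam * (σ^2/(n*Δsq)) = lam * σ^2 / Δsq := by
                  field_simp
                have hp3 : lam * σ ^ 2 / Δsq ≤ (k:ℝ) - k₀ := by
                  rw [← hp2]
                  linarith [hge, hp1]
                calc lam * σ ^ 2 = lam * σ ^ 2 / Δsq * Δsq := by field_simp
                  _ ≤ ((k:ℝ) - k₀) * Δsq := by
                      apply mul_le_mul_of_nonneg_right hp3 hΔpos.le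
                  _ = Δsq * ((k:ℝ) - k₀) := by ring
              have h2 : τ ≤ (k₀:ℝ) / k := by
                rw [hτ]
                gcongr
              rw [hstep]
              have e1 : lam * σ ^ 2 * k₀ / (32 * k * σ ^ 2)
                  ≤ Δsq * ((k:ℝ) - k₀) * k₀ / (32 * k * σ ^ 2) := by
                gcongr
              have e2 : lam * σ ^ 2 * k₀ / (32 * k * σ ^ 2) = lam * ((k₀:ℝ)/k) / 32 := by
                field_simp
              have e3 : lam * τ / 32 ≤ lam * ((k₀:ℝ)/k) / 32 := by
                have := mul_le_mul_of_nonneg_left h2 hlam.le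
                linarith
              have e4 : τ ^ 2 * lam / 64 ≤ lam * τ / 32 := by
                have h5 : τ ^ 2 ≤ τ := by nlinarith
                have h6 : τ ^ 2 * lam ≤ τ * lam := mul_le_mul_of_nonneg_right h5 hlam.le
                have h7 : 0 ≤ τ * lam := mul_nonneg hτpos.le hlam.le
                linarith
              linarith
            gcongr 2 * Real.exp ?_
            linarith
    -- assemble via union bound
    calc P {ω | ∃ k : ℕ, k ≤ n - 2 ∧
          (k : ℝ) ≥ k₀ + n * lam * Psi n σ T Δsq ∧
          |N1 k ω - N2 k ω| / σ ^ 2 >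
            n * Δsq / σ ^ 2 * (((k : ℝ) / n - τ) * k₀) / (4 * k)}
        ≤ P (⋃ k ∈ S, A k) := measure_mono hsub
      _ ≤ ∑ k ∈ S, P (A k) := measure_biUnion_finset_le S A
      _ ≤ ∑ k ∈ S, ENNReal.ofReal (2 * Real.exp (-(τ ^ 2 * lam) / 64)) :=
          Finset.sum_le_sum hAk
      _ = S.card • ENNReal.ofReal (2 * Real.exp (-(τ ^ 2 * lam) / 64)) :=
          Finset.sum_const _
      _ ≤ (n : ℝ≥0∞) * ENNReal.ofReal (2 * Real.exp (-(τ ^ 2 * lam) / 64)) := by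
          rw [nsmul_eq_mul]
          apply mul_le_mul_left
          have hcard : S.card ≤ n := by
            calc S.card ≤ (Finset.Icc (k₀+1) (n-2)).card := Finset.card_filter_le _ _
              _ = n - 2 + 1 - (k₀ + 1) := Nat.card_Icc _ _
              _ ≤ n := by omega
          exact_mod_cast hcard
      _ ≤ ENNReal.ofReal (2 * n * (Real.exp (-(τ ^ 2 * lam) / 64)
            + Real.exp (-(τ ^ 2 * n * Δsq) / (64 * σ ^ 2)))) := by
          rw [← ENNReal.ofReal_natCast n, ← ENNReal.ofReal_mul (by positivity)]
          apply ENNReal.ofReal_le_ofReal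
          have hpos2 : 0 ≤ (n:ℝ) * Real.exp (-(τ ^ 2 * n * Δsq) / (64 * σ ^ 2)) := by
            positivity
          nlinarith [Real.exp_pos (-(τ ^ 2 * lam) / 64)]

end
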